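/- Let L/K be a finite Galois field extension with group Γ, G a group acting on L by a surjection σ : G → Γ with kernel H, and suppose Hom(H, L^×) carries the Γ-action (γ * χ)(h) = γ(χ(g_γ⁻¹ h g_γ)) for any lift g_γ of γ. Fix coset representatives (g_γ)_{γ∈Γ} with g_1 = 1, and define h_{γ₁,γ₂} ∈ H by g_{γ₁}g_{γ₂} = g_{γ₁γ₂} h_{γ₁,γ₂}. Then for every Γ-fixed χ ∈ Hom(H, L^×), the function f_χ(γ₁, γ₂) := (γ₁γ₂)(χ(h_{γ₁,γ₂}))⁻¹ is a 2-cocycle of Γ with values in L^×. -/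

import Mathlib

/-!
Associativity of `s a * s b * s c`, computed in the two possible orders, gives the relation
`h_{a,bc} h_{b,c} = h_{ab,c} · s(c)⁻¹ h_{a,b} s(c)` between the factor sets in `H`. Applying `χ`,
Γ-fixedness turns the conjugation by `s(c)⁻¹` into the action of `c⁻¹`, and after acting by `abc`
this relation is exactly the cocycle identity for `f_χ`.
-/

open groupCohomology

namespace MonoidHom

variable {G Γ : Type*} [Group G] [Group Γ] (σ : G →* Γ) {s : Γ → G}

theorem inv_mul_mul_mem_ker (hs : ∀ γ, σ (s γ) = γ) (a b : Γ) :
    (s (a * b))⁻¹ * (s a * s b) ∈ σ.ker := by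
  simp [MonoidHom.mem_ker, hs]

/-- The paper's `h_{a,b}`, defined by `s a * s b = s (a * b) * h_{a,b}`. -/
def factorSet (hs : ∀ γ, σ (s γ) = γ) (a b : Γ) : σ.ker :=
  ⟨(s (a * b))⁻¹ * (s a * s b), σ.inv_mul_mul_mem_ker hs a b⟩

variable (hs : ∀ γ, σ (s γ) = γ)

theorem coe_factorSet_mul_factorSet (a b c : Γ) :
    ((σ.factorSet hs a (b * c) * σ.factorSet hs b c : σ.ker) : G) =
      σ.factorSet hs (a * b) c * ((s c)⁻¹ * σ.factorSet hs a b * ((s c)⁻¹)⁻¹) := by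
  simp only [factorSet, Subgroup.coe_mul, ← mul_assoc a b c]
  group

variable {M : Type*} [CommGroup M] [MulDistribMulAction Γ M] (χ : σ.ker →* M)

theorem isMulCocycle₂_inv_smul_factorSet
    (hχ : ∀ (g h : G) (hh : h ∈ σ.ker) (hgh : g * h * g⁻¹ ∈ σ.ker),
      χ ⟨g * h * g⁻¹, hgh⟩ = σ g • χ ⟨h, hh⟩) :
    IsMulCocycle₂ fun p : Γ × Γ => ((p.1 * p.2) • χ (σ.factorSet hs p.1 p.2))⁻¹ := by
  intro a b c
  have hconj : (s c)⁻¹ * σ.factorSet hs a b * ((s c)⁻¹)⁻¹ ∈ σ.ker :=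
    σ.normal_ker.conj_mem _ (σ.factorSet hs a b).2 _
  have hprod : σ.factorSet hs a (b * c) * σ.factorSet hs b c =
      σ.factorSet hs (a * b) c * ⟨_, hconj⟩ :=
    Subtype.ext (σ.coe_factorSet_mul_factorSet hs a b c)
  have hχprod := congrArg χ hprod
  rw [map_mul, map_mul, hχ _ _ (σ.factorSet hs a b).2 hconj, map_inv, hs, Subtype.coe_eta]
    at hχprod
  simp only [smul_inv', ← mul_inv, inv_inj]
  calc (a * b * c) • χ (σ.factorSet hs (a * b) c) * (a * b) • χ (σ.factorSet hs a b)
      = (a * b * c) • (χ (σ.factorSet hs (a * b) c) * c⁻¹ • χ (σ.factorSet hs a b)) := by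
        rw [smul_mul', ← mul_smul, mul_inv_cancel_right]
    _ = (a * (b * c)) • (χ (σ.factorSet hs a (b * c)) * χ (σ.factorSet hs b c)) := by
        rw [hχprod, mul_assoc]
    _ = a • (b * c) • χ (σ.factorSet hs b c) * (a * (b * c)) • χ (σ.factorSet hs a (b * c)) := by
        rw [smul_mul', mul_comm, mul_smul a (b * c) (χ _)]

end MonoidHom

theorem stmt15 {K L : Type*} [Field K] [Field L] [Algebra K L]
    {G : Type*} [Group G] (σ : G →* (L ≃ₐ[K] L))
    (χ : σ.ker →* Lˣ)
    (hχ : ∀ (g h : G) (hh : h ∈ σ.ker) (hgh : g * h * g⁻¹ ∈ σ.ker),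
      ((χ ⟨g * h * g⁻¹, hgh⟩ : Lˣ) : L) = σ g ((χ ⟨h, hh⟩ : Lˣ) : L))
    (s : (L ≃ₐ[K] L) → G) (hs : ∀ γ, σ (s γ) = γ)
    (f : (L ≃ₐ[K] L) → (L ≃ₐ[K] L) → Lˣ)
    (hf : ∀ (γ₁ γ₂ : L ≃ₐ[K] L)
        (hmem : (s (γ₁ * γ₂))⁻¹ * (s γ₁ * s γ₂) ∈ σ.ker),
      ((f γ₁ γ₂ : Lˣ) : L)
        = ((γ₁ * γ₂) ((χ ⟨(s (γ₁ * γ₂))⁻¹ * (s γ₁ * s γ₂), hmem⟩ : Lˣ) : L))⁻¹) :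
    ∀ γ₁ γ₂ γ₃ : L ≃ₐ[K] L,
      γ₁ ((f γ₂ γ₃ : Lˣ) : L) * ((f γ₁ (γ₂ * γ₃) : Lˣ) : L)
        = ((f (γ₁ * γ₂) γ₃ : Lˣ) : L) * ((f γ₁ γ₂ : Lˣ) : L) := by
  intro γ₁ γ₂ γ₃
  have hχ' : ∀ (g h : G) (hh : h ∈ σ.ker) (hgh : g * h * g⁻¹ ∈ σ.ker),
      χ ⟨g * h * g⁻¹, hgh⟩ = σ g • χ ⟨h, hh⟩ := fun g h hh hgh =>
    Units.ext (by simpa using hχ g h hh hgh)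
  have hfχ : ∀ a b, f a b = ((a * b) • χ (σ.factorSet hs a b))⁻¹ := fun a b =>
    Units.ext (by simpa [MonoidHom.factorSet] using hf a b (σ.inv_mul_mul_mem_ker hs a b))
  have hcocycle := σ.isMulCocycle₂_inv_smul_factorSet hs χ hχ' γ₁ γ₂ γ₃
  simp only [← hfχ] at hcocycle
  simpa [mul_comm] using (congrArg Units.val hcocycle).symm
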